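/- Let A be a finite abelian group and g ∈ Aut(A) such that the image of id − g is a proper subgroup of A. Then for every coset Y of Im(id − g) in A one has A ▹ Y ⊆ Y; consequently every coset of Im(id − g) is a subrack of the affine rack (A, g), and the union of any two distinct cosets is a decomposable subrack of (A, g). In particular (A, g) is decomposable. -/
import Mathlib


open Pointwise

/-- A nonempty subset of `X` closed under the operation `op` (a subrack). -/
def IsSubrackOf {X : Type*} (op : X → X → X) (Y : Set X) : Prop :=
  Y.Nonempty ∧ ∀ a ∈ Y, ∀ b ∈ Y, op a b ∈ Y

/-- The rack with underlying set `C ⊆ X` and operation `op` is of type D: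
there is a decomposable subrack `R ⊔ S` of `C` and `r ∈ R`, `s ∈ S` with
`r ▹ (s ▹ (r ▹ s)) ≠ s`. -/
def IsTypeDOn {X : Type*} (op : X → X → X) (C : Set X) : Prop :=
  ∃ R S : Set X, R ⊆ C ∧ S ⊆ C ∧ IsSubrackOf op R ∧ IsSubrackOf op S ∧
    Disjoint R S ∧
    (∀ r ∈ R, ∀ s ∈ S, op r s ∈ S) ∧ (∀ s ∈ S, ∀ r ∈ R, op s r ∈ R) ∧
    ∃ r ∈ R, ∃ s ∈ S, op r (op s (op r s)) ≠ s

/-- The affine rack operation `x ▹ y = g(y) + (id - g)(x)` on an abelian group `A`. -/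
def affOp {A : Type*} [AddCommGroup A] (g : A ≃+ A) (x y : A) : A :=
  g y + (x - g x)

/-- The image of `id - g`, as a subset of `A`. -/
def imIdSub {A : Type*} [AddCommGroup A] (g : A ≃+ A) : Set A :=
  Set.range fun a => a - g a

/-- If `A` is a finite abelian group, `g ∈ Aut(A)` and the image of `id - g` is a
proper subgroup of `A`, then `A ▹ Y ⊆ Y` for every coset `Y` of `Im(id - g)`;
hence every coset is a subrack of the affine rack `(A, g)`, the union of any two
distinct cosets is a decomposable subrack, and `(A, g)` is decomposable. -/
lemma im_zero {A : Type*} [AddCommGroup A] (g : A ≃+ A) : (0:A) ∈ imIdSub g :=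
  ⟨0, by simp⟩

lemma im_sub {A : Type*} [AddCommGroup A] (g : A ≃+ A) {a b : A}
    (ha : a ∈ imIdSub g) (hb : b ∈ imIdSub g) : a - b ∈ imIdSub g := by
  obtain ⟨u, rfl⟩ := ha; obtain ⟨v, rfl⟩ := hb
  exact ⟨u - v, by simp only [map_sub]; abel⟩

lemma im_add {A : Type*} [AddCommGroup A] (g : A ≃+ A) {a b : A}
    (ha : a ∈ imIdSub g) (hb : b ∈ imIdSub g) : a + b ∈ imIdSub g := by
  have := im_sub g ha (im_sub g (im_zero g) hb)
  simpa using this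

lemma key {A : Type*} [AddCommGroup A] (g : A ≃+ A) (x y : A) :
    affOp g x y - y ∈ imIdSub g := by
  have : affOp g x y - y = (x - g x) - (y - g y) := by
    simp only [affOp]; abel
  rw [this]
  exact im_sub g ⟨x, rfl⟩ ⟨y, rfl⟩

lemma mem_coset {A : Type*} [AddCommGroup A] (g : A ≃+ A) (c y : A) :
    y ∈ c +ᵥ imIdSub g ↔ y - c ∈ imIdSub g := by
  constructor
  · rintro ⟨z, hz, rfl⟩
    simpa using hz
  · intro h
    exact ⟨y - c, h, by simp⟩

theorem affine_rack_decomposable_of_im_ne_top {A : Type*} [AddCommGroup A] [Fintype A]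
    (g : A ≃+ A) (hproper : imIdSub g ≠ Set.univ) :
    (∀ c x y : A, y ∈ c +ᵥ imIdSub g → affOp g x y ∈ c +ᵥ imIdSub g) ∧
    (∀ c : A, IsSubrackOf (affOp g) (c +ᵥ imIdSub g)) ∧
    (∀ c d : A, c +ᵥ imIdSub g ≠ d +ᵥ imIdSub g →
      Disjoint (c +ᵥ imIdSub g) (d +ᵥ imIdSub g) ∧
      IsSubrackOf (affOp g) ((c +ᵥ imIdSub g) ∪ (d +ᵥ imIdSub g)) ∧
      (∀ r ∈ c +ᵥ imIdSub g, ∀ s ∈ d +ᵥ imIdSub g, affOp g r s ∈ d +ᵥ imIdSub g) ∧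
      (∀ s ∈ d +ᵥ imIdSub g, ∀ r ∈ c +ᵥ imIdSub g, affOp g s r ∈ c +ᵥ imIdSub g)) ∧
    (∃ R S : Set A, R ∪ S = Set.univ ∧ Disjoint R S ∧
      IsSubrackOf (affOp g) R ∧ IsSubrackOf (affOp g) S ∧
      (∀ r ∈ R, ∀ s ∈ S, affOp g r s ∈ S) ∧ (∀ s ∈ S, ∀ r ∈ R, affOp g s r ∈ R)) := by
  
  -- main closure statement
  have h1 : ∀ c x y : A, y ∈ c +ᵥ imIdSub g → affOp g x y ∈ c +ᵥ imIdSub g := by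
    intro c x y hy
    rw [mem_coset] at hy ⊢
    have : affOp g x y - c = (affOp g x y - y) + (y - c) := by abel
    rw [this]
    exact im_add g (key g x y) hy
  have hself : ∀ c : A, c ∈ c +ᵥ imIdSub g := fun c => by
    rw [mem_coset]; simpa using im_zero g
  refine ⟨h1, ?_, ?_, ?_⟩
  · intro c
    exact ⟨⟨c, hself c⟩, fun a _ b hb => h1 c a b hb⟩
  · intro c d hne
    have hdisj : Disjoint (c +ᵥ imIdSub g) (d +ᵥ imIdSub g) := by
      rw [Set.disjoint_left]
      intro z hzc hzd
      apply hne
      rw [mem_coset] at hzc hzd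
      have hcd : c - d ∈ imIdSub g := by
        have : c - d = (z - d) - (z - c) := by abel
        rw [this]; exact im_sub g hzd hzc
      ext y
      rw [mem_coset, mem_coset]
      constructor
      · intro h
        have : y - d = (y - c) + (c - d) := by abel
        rw [this]; exact im_add g h hcd
      · intro h
        have : y - c = (y - d) - (c - d) := by abel
        rw [this]; exact im_sub g h hcd
    refine ⟨hdisj, ⟨⟨c, Or.inl (hself c)⟩, ?_⟩, fun r _ s hs => h1 d r s hs,
      fun s _ r hr => h1 c s r hr⟩
    rintro a _ b (hb | hb)
    · exact Or.inl (h1 c a b hb)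
    · exact Or.inr (h1 d a b hb)
  · obtain ⟨t, ht⟩ : ∃ t : A, t ∉ imIdSub g := by
      by_contra h
      push_neg at h
      exact hproper (Set.eq_univ_of_forall h)
    refine ⟨imIdSub g, (imIdSub g)ᶜ, by simp, disjoint_compl_right,
      ⟨⟨0, im_zero g⟩, ?_⟩, ⟨⟨t, ht⟩, ?_⟩, ?_, ?_⟩
    · intro a _ b hb
      have : affOp g a b = (affOp g a b - b) + b := by abel
      rw [this]; exact im_add g (key g a b) hb
    · intro a _ b hb hmem
      apply hb
      have : b = affOp g a b - (affOp g a b - b) := by abel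
      rw [this]; exact im_sub g hmem (key g a b)
    · intro r _ s hs hmem
      apply hs
      have : s = affOp g r s - (affOp g r s - s) := by abel
      rw [this]; exact im_sub g hmem (key g r s)
    · intro s _ r hr
      have : affOp g s r = (affOp g s r - r) + r := by abel
      rw [this]; exact im_add g (key g s r) hr
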